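/- For every string ω ∈ {0,1}^n, the stabilization time of ω under the simultaneous "01"→"10" substitution equals Depth(Y(ω)), where Y(ω) is the Young diagram associated to ω. -/

import Mathlib

open Finset

/-- The k-th bit of a string of length `n`, padded with `false` out of range. -/
def bit (n : ℕ) (ω : Fin n → Bool) (k : ℕ) : Bool :=
  if h : k < n then ω ⟨k, h⟩ else false

/-- One step of the evolution: every occurrence of "01" is replaced by "10"
(simultaneously).  `E(ω)_i = 1` iff `(ω_i = 1 ∧ ¬(i ≥ 2 ∧ ω_{i-1} = 0)) ∨
(ω_i = 0 ∧ i < n ∧ ω_{i+1} = 1)` (1-indexed; here 0-indexed). -/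
def evolve (n : ℕ) (ω : Fin n → Bool) : Fin n → Bool :=
  fun i =>
    (bit n ω i.val && !(decide (0 < i.val) && !bit n ω (i.val - 1)))
      || (!bit n ω i.val && bit n ω (i.val + 1))

/-- A string is stable iff it contains no occurrence of "01". -/
def IsStable (n : ℕ) (ω : Fin n → Bool) : Prop :=
  ∀ k : ℕ, ¬(bit n ω k = false ∧ bit n ω (k + 1) = true)

/-- The stabilization time: the least number of applications of `evolve`
after which the string is stable. -/
noncomputable def stabTime (n : ℕ) (ω : Fin n → Bool) : ℕ :=
  sInf {m : ℕ | IsStable n ((evolve n)^[m] ω)}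

/-- A Young diagram: a finite down-closed set of cells in ℕ≥1 × ℕ≥1. -/
def IsYoungDiagram (Y : Finset (ℕ × ℕ)) : Prop :=
  (∀ c ∈ Y, 1 ≤ c.1 ∧ 1 ≤ c.2) ∧
    ∀ c ∈ Y, ∀ i j : ℕ, 1 ≤ i → 1 ≤ j → i ≤ c.1 → j ≤ c.2 → (i, j) ∈ Y

/-- The corner-cutting map: remove all exposed corners, i.e. cells `(i,j)` with
`(i+1,j) ∉ Y` and `(i,j+1) ∉ Y`. -/
def cutCorners (Y : Finset (ℕ × ℕ)) : Finset (ℕ × ℕ) :=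
  Y.filter fun c => (c.1 + 1, c.2) ∈ Y ∨ (c.1, c.2 + 1) ∈ Y

/-- Depth of a Young diagram: `max {i + j - 1 : (i,j) ∈ Y}`, with `depth ∅ = 0`. -/
def depth (Y : Finset (ℕ × ℕ)) : ℕ := Y.sup fun c => c.1 + c.2 - 1

/-- Number of zeros among the first `m` bits of `ω`. -/
def zerosBefore (n : ℕ) (ω : Fin n → Bool) (m : ℕ) : ℕ :=
  (Finset.univ.filter fun l : Fin n => l.val < m ∧ ω l = false).card

/-- Number of ones among the bits of `ω` from position `m` (0-indexed) on. -/
def onesFrom (n : ℕ) (ω : Fin n → Bool) (m : ℕ) : ℕ :=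
  (Finset.univ.filter fun l : Fin n => m ≤ l.val ∧ ω l = true).card

open Classical in
/-- The Young diagram associated to a binary string: the cells below the
monotone lattice path reading ω left to right (0 = right step, 1 = down step).
`(i,j) ∈ Y(ω)` iff there is a cut point `m` with at least `i` zeros among the
first `m` bits and at least `j` ones among the remaining bits. -/
noncomputable def diag (n : ℕ) (ω : Fin n → Bool) : Finset (ℕ × ℕ) :=
  (Finset.Icc 1 n ×ˢ Finset.Icc 1 n).filter fun c =>
    1 ≤ c.1 ∧ 1 ≤ c.2 ∧ ∃ m ≤ n, c.1 ≤ zerosBefore n ω m ∧ c.2 ≤ onesFrom n ω m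


/-! Cut the string between positions `m - 1` and `m`; the corner of the lattice path at this cut
is the cell `(zerosBefore m, onesFrom m)`, so `depth Y(ω)` is the maximum of
`zerosBefore m + onesFrom m - 1` over the cuts with a zero before and a one after them.
One step of the evolution lowers both coordinates by one at the cuts straddled by a `01` (which
gets swapped) and leaves all other cuts unchanged. A cut maximizing `zerosBefore + onesFrom` is
always straddled by a `01`, since otherwise moving it one step raises the sum; so every step
lowers the depth by exactly one, and the string is stable exactly when no such cut is left. -/

section Counting

variable {n : ℕ} (ω : Fin n → Bool)

@[simp]
lemma bit_val (l : Fin n) : bit n ω l = ω l := dif_pos l.isLt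

lemma bit_eq_false_of_le {k : ℕ} (h : n ≤ k) : bit n ω k = false := dif_neg (not_lt.mpr h)

lemma lt_of_bit_eq_true {k : ℕ} (h : bit n ω k = true) : k < n := by
  by_contra hk
  simp [bit_eq_false_of_le ω (not_lt.mp hk)] at h

lemma card_filter_fin (p : ℕ → Bool → Prop) [∀ k b, Decidable (p k b)] :
    #{l : Fin n | p l (ω l)} = #{k ∈ range n | p k (bit n ω k)} := by
  refine card_nbij (fun l => l.val) (fun l hl => ?_) (fun a _ b _ h => Fin.ext h) (fun k hk => ?_)
  · simpa using hl
  · obtain ⟨hkn, hk⟩ := mem_filter.mp hk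
    exact ⟨⟨k, mem_range.mp hkn⟩, by simpa [bit, mem_range.mp hkn] using hk, rfl⟩

lemma zerosBefore_eq_card (m : ℕ) :
    zerosBefore n ω m = #{k ∈ range m | k < n ∧ bit n ω k = false} := by
  rw [zerosBefore, card_filter_fin ω (fun k b => k < m ∧ b = false)]
  congr 1; ext k; simp only [mem_filter, mem_range]; tauto

lemma onesFrom_eq_card (m : ℕ) :
    onesFrom n ω m = #{k ∈ Ico m n | bit n ω k = true} := by
  rw [onesFrom, card_filter_fin ω (fun k b => m ≤ k ∧ b = true)]
  congr 1; ext k; simp only [mem_filter, mem_range, mem_Ico]; tauto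

lemma zerosBefore_zero : zerosBefore n ω 0 = 0 := by
  simp [zerosBefore_eq_card]

lemma zerosBefore_succ (m : ℕ) :
    zerosBefore n ω (m + 1) =
      zerosBefore n ω m + if m < n ∧ bit n ω m = false then 1 else 0 := by
  simp only [zerosBefore_eq_card, range_add_one, filter_insert]
  split_ifs <;> simp

lemma onesFrom_eq_zero_of_le {m : ℕ} (h : n ≤ m) : onesFrom n ω m = 0 := by
  simp [onesFrom_eq_card, Ico_eq_empty_of_le h]

lemma onesFrom_eq_onesFrom_succ_add (m : ℕ) :
    onesFrom n ω m = onesFrom n ω (m + 1) + if bit n ω m = true then 1 else 0 := by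
  rcases lt_or_ge m n with h | h
  · simp only [onesFrom_eq_card, ← insert_Ico_add_one_left_eq_Ico h, filter_insert]
    split_ifs <;> simp
  · simp [onesFrom_eq_zero_of_le ω h, onesFrom_eq_zero_of_le ω (h.trans m.le_succ),
      bit_eq_false_of_le ω h]

lemma lt_of_onesFrom_pos {m : ℕ} (h : 0 < onesFrom n ω m) : m < n := by
  by_contra hm
  simp [onesFrom_eq_zero_of_le ω (not_lt.mp hm)] at h

lemma onesFrom_add_zerosBefore {m : ℕ} (h : m ≤ n) :
    onesFrom n ω m + zerosBefore n ω n = zerosBefore n ω m + (n - m) := by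
  induction h using Nat.decreasingInduction with
  | self => simp [onesFrom_eq_zero_of_le]
  | of_succ m hm ih =>
    rw [zerosBefore_succ] at ih
    rw [onesFrom_eq_onesFrom_succ_add]
    cases hb : bit n ω m <;> simp [hb, hm] at ih ⊢ <;> omega

lemma zerosBefore_le (m : ℕ) : zerosBefore n ω m ≤ n :=
  (card_filter_le _ _).trans_eq (card_fin n)

lemma onesFrom_le (m : ℕ) : onesFrom n ω m ≤ n :=
  (card_filter_le _ _).trans_eq (card_fin n)

end Counting

def swapAt (n : ℕ) (ω : Fin n → Bool) (m : ℕ) : ℕ :=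
  if 0 < m ∧ bit n ω (m - 1) = false ∧ bit n ω m = true then 1 else 0

section Evolve

variable {n : ℕ} (ω : Fin n → Bool)

lemma swapAt_eq_one_iff {m : ℕ} :
    swapAt n ω m = 1 ↔ 0 < m ∧ bit n ω (m - 1) = false ∧ bit n ω m = true := by
  unfold swapAt; split_ifs with h <;> simp [h]

lemma swapAt_le_one (m : ℕ) : swapAt n ω m ≤ 1 := by
  unfold swapAt; split_ifs <;> simp

lemma swapAt_eq_zero_of_le {m : ℕ} (h : n ≤ m) : swapAt n ω m = 0 := by
  simp [swapAt, bit_eq_false_of_le ω h]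

lemma bit_evolve (k : ℕ) :
    bit n (evolve n ω) k =
      ((bit n ω k && !(decide (0 < k) && !bit n ω (k - 1))) ||
        (!bit n ω k && bit n ω (k + 1))) := by
  rcases lt_or_ge k n with h | h
  · exact dif_pos h
  · simp [bit_eq_false_of_le _ h, bit_eq_false_of_le ω (h.trans k.le_succ)]

lemma zeroIndicator_evolve_add_swapAt (k : ℕ) :
    (if k < n ∧ bit n (evolve n ω) k = false then 1 else 0) + swapAt n ω (k + 1) =
      (if k < n ∧ bit n ω k = false then 1 else 0) + swapAt n ω k := by
  rcases lt_or_ge k n with h | h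
  · rw [swapAt, swapAt, bit_evolve, Nat.add_sub_cancel]
    rcases Nat.eq_zero_or_pos k with rfl | hk
    · cases bit n ω 0 <;> cases bit n ω 1 <;> simp [h]
    · cases bit n ω (k - 1) <;> cases bit n ω k <;> cases bit n ω (k + 1) <;> simp [h, hk]
  · simp [not_lt.mpr h, swapAt_eq_zero_of_le ω h, swapAt_eq_zero_of_le ω (h.trans k.le_succ)]

lemma zerosBefore_evolve_add_swapAt (m : ℕ) :
    zerosBefore n (evolve n ω) m + swapAt n ω m = zerosBefore n ω m := by
  induction m with
  | zero => simp [zerosBefore_zero, swapAt]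
  | succ m ih =>
    have := zeroIndicator_evolve_add_swapAt ω m
    rw [zerosBefore_succ, zerosBefore_succ]
    omega

-- The ones after a cut are the positions after it minus the zeros after it, and `evolve`
-- preserves the total number of zeros.
lemma onesFrom_evolve_add_swapAt (m : ℕ) :
    onesFrom n (evolve n ω) m + swapAt n ω m = onesFrom n ω m := by
  rcases le_or_gt m n with h | h
  · have := onesFrom_add_zerosBefore ω h
    have := onesFrom_add_zerosBefore (evolve n ω) h
    have := zerosBefore_evolve_add_swapAt ω m
    have := zerosBefore_evolve_add_swapAt ω n
    rw [swapAt_eq_zero_of_le ω le_rfl] at this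
    omega
  · simp [onesFrom_eq_zero_of_le _ h.le, swapAt_eq_zero_of_le ω h.le]

end Evolve

def cutPoints (n : ℕ) (ω : Fin n → Bool) : Finset ℕ :=
  {m ∈ range (n + 1) | 0 < zerosBefore n ω m ∧ 0 < onesFrom n ω m}

def cutDepth (n : ℕ) (ω : Fin n → Bool) : ℕ :=
  (cutPoints n ω).sup fun m => zerosBefore n ω m + onesFrom n ω m - 1

section CutDepth

variable {n : ℕ} {ω : Fin n → Bool}

lemma mem_cutPoints {m : ℕ} :
    m ∈ cutPoints n ω ↔ m ≤ n ∧ 0 < zerosBefore n ω m ∧ 0 < onesFrom n ω m := by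
  simp [cutPoints]

lemma le_cutDepth {m : ℕ} (hm : m ∈ cutPoints n ω) :
    zerosBefore n ω m + onesFrom n ω m - 1 ≤ cutDepth n ω :=
  le_sup (f := fun m => zerosBefore n ω m + onesFrom n ω m - 1) hm

lemma depth_diag : depth (diag n ω) = cutDepth n ω := by
  apply le_antisymm
  · refine Finset.sup_le fun c hc => ?_
    obtain ⟨-, h1, h2, m, hmn, hZ, hO⟩ := mem_filter.mp hc
    have hm : m ∈ cutPoints n ω := mem_cutPoints.mpr ⟨hmn, by omega, by omega⟩
    have := le_cutDepth hm
    show c.1 + c.2 - 1 ≤ _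
    omega
  · refine Finset.sup_le fun m hm => ?_
    obtain ⟨hmn, hZ, hO⟩ := mem_cutPoints.mp hm
    have hc : (zerosBefore n ω m, onesFrom n ω m) ∈ diag n ω := by
      simp only [_root_.diag, mem_filter, mem_product, mem_Icc]
      exact ⟨⟨⟨hZ, zerosBefore_le ω m⟩, ⟨hO, onesFrom_le ω m⟩⟩,
        hZ, hO, m, hmn, le_rfl, le_rfl⟩
    exact le_sup (f := fun c : ℕ × ℕ => c.1 + c.2 - 1) hc

lemma cutDepth_eq_zero_iff : cutDepth n ω = 0 ↔ cutPoints n ω = ∅ := by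
  refine ⟨fun h => eq_empty_of_forall_notMem fun m hm => ?_, fun h => by simp [cutDepth, h]⟩
  have := le_cutDepth hm
  have := (mem_cutPoints.mp hm).2
  omega

lemma exists_higher_cutPoint {m : ℕ} (hm : m ∈ cutPoints n ω) (hswap : swapAt n ω m = 0) :
    ∃ m' ∈ cutPoints n ω,
      zerosBefore n ω m + onesFrom n ω m < zerosBefore n ω m' + onesFrom n ω m' := by
  obtain ⟨hmn, hZ, hO⟩ := mem_cutPoints.mp hm
  obtain ⟨t, rfl⟩ : ∃ t, m = t + 1 :=
    Nat.exists_eq_add_one.mpr (Nat.pos_of_ne_zero (by rintro rfl; simp [zerosBefore_zero] at hZ))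
  cases hbt : bit n ω t
  · have hbm : bit n ω (t + 1) = false := by simpa [swapAt, hbt] using hswap
    have hZm := zerosBefore_succ ω (t + 1)
    have hOm := onesFrom_eq_onesFrom_succ_add ω (t + 1)
    simp only [hbm, lt_of_onesFrom_pos ω hO, and_self, if_true, Bool.false_eq_true, if_false,
      add_zero] at hZm hOm
    have := lt_of_onesFrom_pos ω (m := t + 1 + 1) (by omega)
    exact ⟨t + 1 + 1, mem_cutPoints.mpr ⟨by omega, by omega, by omega⟩, by omega⟩
  · have hZt := zerosBefore_succ ω t
    have hOt := onesFrom_eq_onesFrom_succ_add ω t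
    simp only [hbt, Bool.true_eq_false, and_false, if_false, if_true, add_zero] at hZt hOt
    exact ⟨t, mem_cutPoints.mpr ⟨by omega, by omega, by omega⟩, by omega⟩

lemma exists_swapAt_eq_one_cutDepth_eq (h : (cutPoints n ω).Nonempty) :
    ∃ m ∈ cutPoints n ω,
      swapAt n ω m = 1 ∧ zerosBefore n ω m + onesFrom n ω m - 1 = cutDepth n ω := by
  obtain ⟨m, hm, hmax⟩ :=
    exists_mem_eq_sup _ h fun m => zerosBefore n ω m + onesFrom n ω m - 1
  have hdepth : cutDepth n ω = zerosBefore n ω m + onesFrom n ω m - 1 := hmax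
  refine ⟨m, hm, ?_, hdepth.symm⟩
  obtain hswap | hswap := Nat.le_one_iff_eq_zero_or_eq_one.mp (swapAt_le_one ω m)
  · obtain ⟨m', hm', hlt⟩ := exists_higher_cutPoint hm hswap
    have := le_cutDepth hm'
    have := (mem_cutPoints.mp hm).2
    omega
  · exact hswap

lemma isStable_iff_cutPoints_eq_empty : IsStable n ω ↔ cutPoints n ω = ∅ := by
  constructor
  · intro hst
    by_contra hne
    obtain ⟨m, -, hswap, -⟩ := exists_swapAt_eq_one_cutDepth_eq (nonempty_iff_ne_empty.mpr hne)
    obtain ⟨hm, h0, h1⟩ := (swapAt_eq_one_iff ω).mp hswap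
    exact hst (m - 1) ⟨h0, by rwa [Nat.sub_add_cancel hm]⟩
  · intro h k ⟨h0, h1⟩
    have hZ := zerosBefore_succ ω k
    have hO := onesFrom_eq_onesFrom_succ_add ω (k + 1)
    have hk := lt_of_bit_eq_true ω h1
    simp only [h0, h1, show k < n by omega, and_self, if_true] at hZ hO
    have : k + 1 ∈ cutPoints n ω := mem_cutPoints.mpr ⟨by omega, by omega, by omega⟩
    simp [h] at this

lemma cutDepth_evolve_le : cutDepth n (evolve n ω) ≤ cutDepth n ω - 1 := by
  refine Finset.sup_le fun m hm => ?_
  obtain ⟨hmn, hZ, hO⟩ := mem_cutPoints.mp hm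
  have hZ' := zerosBefore_evolve_add_swapAt ω m
  have hO' := onesFrom_evolve_add_swapAt ω m
  have hm' : m ∈ cutPoints n ω := mem_cutPoints.mpr ⟨hmn, by omega, by omega⟩
  show zerosBefore n (evolve n ω) m + onesFrom n (evolve n ω) m - 1 ≤ _
  obtain hswap | hswap := Nat.le_one_iff_eq_zero_or_eq_one.mp (swapAt_le_one ω m)
  · obtain ⟨m'', hm'', hlt⟩ := exists_higher_cutPoint hm' hswap
    have := le_cutDepth hm''
    omega
  · have := le_cutDepth hm'
    omega

lemma le_cutDepth_evolve {m : ℕ} (hm : m ∈ cutPoints n ω) (hswap : swapAt n ω m = 0) :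
    zerosBefore n ω m + onesFrom n ω m - 1 ≤ cutDepth n (evolve n ω) := by
  obtain ⟨hmn, hZ, hO⟩ := mem_cutPoints.mp hm
  have hZ' := zerosBefore_evolve_add_swapAt ω m
  have hO' := onesFrom_evolve_add_swapAt ω m
  rw [hswap, add_zero] at hZ' hO'
  rw [← hZ', ← hO']
  exact le_cutDepth (mem_cutPoints.mpr ⟨hmn, by omega, by omega⟩)

lemma cutDepth_sub_one_le_cutDepth_evolve : cutDepth n ω - 1 ≤ cutDepth n (evolve n ω) := by
  rcases (cutPoints n ω).eq_empty_or_nonempty with h | h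
  · simp [cutDepth_eq_zero_iff.mpr h]
  obtain ⟨m, hm, hswap, hdepth⟩ := exists_swapAt_eq_one_cutDepth_eq h
  obtain ⟨hmn, hZ, hO⟩ := mem_cutPoints.mp hm
  obtain ⟨hm0, h0, h1⟩ := (swapAt_eq_one_iff ω).mp hswap
  obtain ⟨t, rfl⟩ : ∃ t, m = t + 1 := Nat.exists_eq_add_one.mpr hm0
  rw [Nat.add_sub_cancel] at h0
  have hZt := zerosBefore_succ ω t
  have hOt := onesFrom_eq_onesFrom_succ_add ω t
  have hZm := zerosBefore_succ ω (t + 1)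
  have hOm := onesFrom_eq_onesFrom_succ_add ω (t + 1)
  simp only [h0, h1, show t < n by omega, and_self, and_false, if_true, if_false,
    Bool.false_eq_true, Bool.true_eq_false, add_zero] at hZt hOt hZm hOm
  -- Move the cut off the swapped pair to the side where it keeps a zero before and a one after.
  by_cases hZ2 : 2 ≤ zerosBefore n ω (t + 1)
  · have ht : t ∈ cutPoints n ω := mem_cutPoints.mpr ⟨by omega, by omega, by omega⟩
    have := le_cutDepth_evolve ht (by simp [swapAt, h0])
    omega
  by_cases hO2 : 2 ≤ onesFrom n ω (t + 1)
  · have := lt_of_onesFrom_pos ω (m := t + 1 + 1) (by omega)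
    have ht : t + 1 + 1 ∈ cutPoints n ω := mem_cutPoints.mpr ⟨by omega, by omega, by omega⟩
    have := le_cutDepth_evolve ht (by simp [swapAt, h1])
    omega
  omega

lemma cutDepth_evolve : cutDepth n (evolve n ω) = cutDepth n ω - 1 :=
  le_antisymm cutDepth_evolve_le cutDepth_sub_one_le_cutDepth_evolve

lemma cutDepth_iterate_evolve (k : ℕ) : cutDepth n ((evolve n)^[k] ω) = cutDepth n ω - k := by
  induction k with
  | zero => rfl
  | succ k ih => rw [Function.iterate_succ_apply', cutDepth_evolve, ih]; omega

end CutDepth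

/-- For every string, the stabilization time equals the depth of the
associated Young diagram. -/
theorem stmt6 (n : ℕ) (ω : Fin n → Bool) :
    stabTime n ω = depth (diag n ω) := by
  have hstable : {m | IsStable n ((evolve n)^[m] ω)} = Set.Ici (cutDepth n ω) := by
    ext m
    rw [Set.mem_ofPred_eq, isStable_iff_cutPoints_eq_empty, ← cutDepth_eq_zero_iff,
      cutDepth_iterate_evolve, Set.mem_Ici]
    omega
  rw [stabTime, hstable, csInf_Ici, depth_diag]
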